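/- Let H''_8 be the graph on vertex set {1,2,3,4} × {0,1} in which the four vertices (i,0) form a complete graph K_4, each (i,0) is adjacent to (i,1) (a perfect matching), and among the vertices (i,1) the only edges are (1,1)(2,1) and (3,1)(4,1) (two vertex-disjoint edges). Then H''_8 is 2-connected, has 8 vertices, diameter three, and exactly 7 distinct lines. -/
import Mathlib


open SimpleGraph

/-- The line defined by two vertices `a` and `b` of a graph: `{a, b}` together with all
vertices `c` lying on a shortest path through `a`, `b` and `c` (in some order). -/
def SimpleGraph.line {V : Type*} (G : SimpleGraph V) (a b : V) : Set V :=
  {a, b} ∪ {c | G.dist a b = G.dist a c + G.dist c b ∨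
                G.dist a c = G.dist a b + G.dist b c ∨
                G.dist b c = G.dist b a + G.dist a c}

/-- The set of all lines of a graph. -/
def SimpleGraph.lineSet {V : Type*} (G : SimpleGraph V) : Set (Set V) :=
  {s | ∃ a b : V, a ≠ b ∧ s = G.line a b}

/-- A graph is locally connected if the subgraph induced on each neighborhood is connected. -/
def SimpleGraph.LocallyConnected {V : Type*} (G : SimpleGraph V) : Prop :=
  ∀ v : V, (G.induce (G.neighborSet v)).Connected

/-- The graph `H''₈`: a complete graph on the four vertices `(i, 0)`, a perfect matching
`(i, 0)–(i, 1)`, and, among the vertices `(i, 1)`, only the two vertex-disjoint edges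
`(0,1)–(1,1)` and `(2,1)–(3,1)`. -/
def H8'' : SimpleGraph (Fin 4 × Fin 2) :=
  SimpleGraph.fromRel
    (fun a b =>
      (a.2 = 0 ∧ b.2 = 0 ∧ a.1 ≠ b.1) ∨ (a.2 ≠ b.2 ∧ a.1 = b.1) ∨
      (a.2 = 1 ∧ b.2 = 1 ∧ ((a.1 = 0 ∧ b.1 = 1) ∨ (a.1 = 2 ∧ b.1 = 3))))

/-! ### Auxiliary machinery -/

instance : DecidableRel H8''.Adj := fun a b =>
  decidable_of_iff _ (SimpleGraph.fromRel_adj _ a b).symm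

instance instIndAdj {W : Type*} (G : SimpleGraph W) [DecidableRel G.Adj] (s : Set W) :
    DecidableRel (G.induce s).Adj := fun a b =>
  inferInstanceAs (Decidable (G.Adj a.val b.val))

section StepClosure

variable {V : Type*} [Fintype V] [DecidableEq V]

/-- One step of the breadth-first closure of a set of vertices. -/
def stepSet (G : SimpleGraph V) [DecidableRel G.Adj] (s : Finset V) : Finset V :=
  s ∪ Finset.univ.filter (fun v => ∃ u ∈ s, G.Adj u v)

lemma reach_of_mem_stepSet (G : SimpleGraph V) [DecidableRel G.Adj] (r : V) :
    ∀ n, ∀ v ∈ (stepSet G)^[n] {r}, G.Reachable r v := by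
  intro n
  induction n with
  | zero => intro v hv; simp at hv; subst hv; exact Reachable.refl _
  | succ n ih =>
    intro v hv
    rw [Function.iterate_succ_apply'] at hv
    simp only [stepSet, Finset.mem_union, Finset.mem_filter] at hv
    rcases hv with h | ⟨-, u, hu, hadj⟩
    · exact ih v h
    · exact (ih u hu).trans hadj.reachable

lemma connected_of_step (G : SimpleGraph V) [DecidableRel G.Adj] (r : V) (n : ℕ)
    (h : Finset.univ ⊆ (stepSet G)^[n] {r}) : G.Connected := by
  rw [SimpleGraph.connected_iff]
  refine ⟨fun u v => ?_, ⟨r⟩⟩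
  exact (reach_of_mem_stepSet G r n u (h (Finset.mem_univ u))).symm.trans
    (reach_of_mem_stepSet G r n v (h (Finset.mem_univ v)))

end StepClosure

/-- The explicit distance function on `H8''`. -/
def DD (a b : Fin 4 × Fin 2) : ℕ :=
  if a = b then 0 else if H8''.Adj a b then 1
  else if ∃ c, H8''.Adj a c ∧ H8''.Adj c b then 2 else 3

lemma ex3 : ∀ a b : Fin 4 × Fin 2, DD a b = 3 →
    ∃ c d, H8''.Adj a c ∧ H8''.Adj c d ∧ H8''.Adj d b := by decide

lemma H8_conn : H8''.Connected := connected_of_step H8'' (0,0) 2 (by decide)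

lemma key : ∀ a b, H8''.dist a b = DD a b := by
  intro a b
  unfold DD
  split_ifs with h1 h2 h3
  · subst h1; simp
  · exact dist_eq_one_iff_adj.mpr h2
  · obtain ⟨c, hac, hcb⟩ := h3
    have hle : H8''.dist a b ≤ 2 := by
      simpa using dist_le (Walk.cons hac hcb.toWalk)
    have h0 : H8''.dist a b ≠ 0 := by simp [H8_conn.dist_eq_zero_iff, h1]
    have hne1 : H8''.dist a b ≠ 1 := fun h => h2 (dist_eq_one_iff_adj.mp h)
    omega
  · have hDD : DD a b = 3 := by unfold DD; simp [h1, h2, h3]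
    obtain ⟨c, d, hac, hcd, hdb⟩ := ex3 a b hDD
    have hle : H8''.dist a b ≤ 3 := by
      simpa using dist_le (Walk.cons hac (Walk.cons hcd hdb.toWalk))
    have h0 : H8''.dist a b ≠ 0 := by simp [H8_conn.dist_eq_zero_iff, h1]
    have hne1 : H8''.dist a b ≠ 1 := fun h => h2 (dist_eq_one_iff_adj.mp h)
    have hne2 : H8''.dist a b ≠ 2 := by
      intro h
      obtain ⟨p, hp⟩ := (H8_conn a b).exists_walk_length_eq_dist
      rw [h] at hp
      cases p with
      | nil => simp at hp
      | cons h q =>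
        cases q with
        | nil => simp at hp
        | cons h' q' =>
          cases q' with
          | nil => exact h3 ⟨_, h, h'⟩
          | cons h'' q'' => simp at hp
    omega

/-- `line` as a computable finset. -/
def line' (a b : Fin 4 × Fin 2) : Finset (Fin 4 × Fin 2) :=
  Finset.univ.filter (fun c => c = a ∨ c = b ∨ DD a b = DD a c + DD c b ∨
    DD a c = DD a b + DD b c ∨ DD b c = DD b a + DD a c)

lemma line_eq (a b : Fin 4 × Fin 2) : H8''.line a b = ↑(line' a b) := by
  ext c
  simp [SimpleGraph.line, line', key, or_assoc]

/-- The set of all lines, as a finset of finsets. -/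
def LS : Finset (Finset (Fin 4 × Fin 2)) :=
  Finset.univ.offDiag.image (fun p => line' p.1 p.2)

lemma lineSet_eq :
    H8''.lineSet = (fun t : Finset (Fin 4 × Fin 2) => (↑t : Set _)) '' ↑LS := by
  ext s
  constructor
  · rintro ⟨a, b, hab, rfl⟩
    exact ⟨line' a b, Finset.mem_image.mpr ⟨(a, b),
      Finset.mem_offDiag.mpr ⟨Finset.mem_univ _, Finset.mem_univ _, hab⟩, rfl⟩,
      (line_eq a b).symm⟩
  · rintro ⟨t, ht, rfl⟩
    obtain ⟨⟨a, b⟩, hp, rfl⟩ := Finset.mem_image.mp ht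
    exact ⟨a, b, (Finset.mem_offDiag.mp hp).2.2, (line_eq a b).symm⟩

lemma LScard : LS.card = 7 := by decide

theorem H8''_two_connected_diam_three_seven_lines :
    (H8''.Connected ∧ 3 ≤ Fintype.card (Fin 4 × Fin 2) ∧
      ∀ v : Fin 4 × Fin 2, (H8''.induce ({v}ᶜ : Set (Fin 4 × Fin 2))).Connected) ∧
    Fintype.card (Fin 4 × Fin 2) = 8 ∧ H8''.diam = 3 ∧ H8''.lineSet.ncard = 7 := by
  refine ⟨⟨H8_conn, by decide, ?_⟩, by decide, ?_, ?_⟩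
  · intro v
    fin_cases v <;>
      first
        | exact connected_of_step _ ⟨(1,0), by decide⟩ 3 (by decide)
        | exact connected_of_step _ ⟨(0,0), by decide⟩ 3 (by decide)
  · have hub : H8''.diam ≤ 3 := by
      obtain ⟨u, v, h⟩ := exists_dist_eq_diam (G := H8'')
      rw [← h, key]
      have h3 : ∀ u v, DD u v ≤ 3 := by decide
      exact h3 u v
    have hne : H8''.ediam ≠ ⊤ := by
      obtain ⟨u, v, h⟩ := exists_edist_eq_ediam_of_finite (G := H8'')
      rw [← h, edist_ne_top_iff_reachable]
      exact H8_conn u v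
    have hlb : 3 ≤ H8''.diam := by
      have hd : H8''.dist (0,1) (2,1) = 3 := by rw [key]; decide
      calc 3 = H8''.dist (0,1) (2,1) := hd.symm
        _ ≤ H8''.diam := dist_le_diam hne
    omega
  · rw [lineSet_eq, Set.ncard_image_of_injective _ Finset.coe_injective,
      Set.ncard_coe_finset, LScard]
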